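/- arXiv:1503.05492 — 6 statements merged into one kernel-verified Lean document; each statement's English description precedes it below -/
import Mathlib

section
/- Let R be a commutative Noetherian ring, C a semidualizing R-module, and M an R-module. Then M ≠ 0 if and only if Hom_R(C, M) ≠ 0; moreover, M ≠ 0 if and only if C ⊗_R M ≠ 0. -/
open CategoryTheory

universe u

/-- `C` is a semidualizing `R`-module: finitely generated, the homothety map
`R → Hom_R(C,C)` is bijective, and `Ext^i_R(C,C) = 0` for all `i > 0`. -/
def IsSemidualizing (R : Type u) [CommRing R] (C : Type u) [AddCommGroup C] [Module R C] :
    Prop :=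
  Module.Finite R C ∧
  Function.Bijective (LinearMap.lsmul R C) ∧
  ∀ i : ℕ, 0 < i →
    Subsingleton
      (((Ext R (ModuleCat.{u} R) i).obj (Opposite.op (ModuleCat.of R C))).obj (ModuleCat.of R C))
open scoped TensorProduct

/-!
A finitely generated faithful module `C` has full support, so for every prime `p` the fibre
`κ(p) ⊗ C` is nonzero and carries a nonzero functional; clearing denominators over the finitely
many generators turns it into a nonzero map `C → R ⧸ p`. Over a Noetherian ring every nonzero
`N` contains some `R ⧸ p` (an associated prime), whence `Hom(C, N) ≠ 0`. Applied to the character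
module `M⋆`, this gives `(C ⊗ M)⋆ ≅ Hom(C, M⋆) ≠ 0`.
-/

section

variable {R C : Type*} [CommRing R] [AddCommGroup C] [Module R C]

theorem CharacterModule.nontrivial_iff {A : Type*} [AddCommGroup A] :
    Nontrivial (CharacterModule A) ↔ Nontrivial A := by
  refine ⟨fun _ => ?_, fun _ => ?_⟩
  · obtain ⟨c, hc⟩ := exists_ne (0 : CharacterModule A)
    obtain ⟨a, ha⟩ : ∃ a, c a ≠ 0 := not_forall.mp fun h => hc (DFunLike.ext _ _ h)
    exact nontrivial_of_ne a 0 fun h => ha (by rw [h, map_zero])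
  · obtain ⟨a, ha⟩ := exists_ne (0 : A)
    obtain ⟨c, hc⟩ := CharacterModule.exists_character_apply_ne_zero_of_ne_zero ha
    exact nontrivial_of_ne c 0 fun h => hc (by rw [h]; rfl)

theorem LinearMap.nontrivial_of_isFractionRing (D K : Type*) [CommRing D] [Algebra R D]
    [CommRing K] [Algebra D K] [Algebra R K] [IsScalarTower R D K] [IsFractionRing D K]
    [Module.Finite R C] [Nontrivial (C →ₗ[R] K)] : Nontrivial (C →ₗ[R] D) := by
  obtain ⟨f, hf⟩ := exists_ne (0 : C →ₗ[R] K)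
  obtain ⟨t, ht⟩ := Module.Finite.fg_top (R := R) (M := C)
  obtain ⟨b, hb⟩ := IsLocalization.exist_integer_multiples (nonZeroDivisors D) t f
  let ι : D →ₗ[R] K := (Algebra.linearMap D K).restrictScalars R
  have hι : Function.Injective ι := IsFractionRing.injective D K
  have hbf : (b : D) • f ≠ 0 := fun h => hf <| by
    ext c
    have := congr($h c)
    rw [LinearMap.smul_apply, LinearMap.zero_apply, Algebra.smul_def] at this
    exact (IsLocalization.map_units K b).mul_right_eq_zero.mp this
  have hrange : ∀ c, ((b : D) • f) c ∈ LinearMap.range ι := by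
    suffices ⊤ ≤ (LinearMap.range ι).comap ((b : D) • f) from fun c => this trivial
    rw [← ht, Submodule.span_le]
    exact hb
  let g := (LinearEquiv.ofInjective ι hι).symm.toLinearMap ∘ₗ ((b : D) • f).codRestrict _ hrange
  have hιg : ι ∘ₗ g = (b : D) • f := by
    ext c
    exact LinearEquiv.ofInjective_symm_apply (h := hι) ι _
  exact nontrivial_of_ne g 0 fun hg => hbf (by rw [← hιg, hg, LinearMap.comp_zero])

theorem Module.mem_support_of_faithfulSMul [Module.Finite R C] [FaithfulSMul R C]
    (p : PrimeSpectrum R) : p ∈ Module.support R C :=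
  Module.mem_support_iff_of_finite.mpr (by rw [Module.annihilator_eq_bot.mpr ‹_›]; exact bot_le)

theorem LinearMap.nontrivial_quotient_of_faithfulSMul [Module.Finite R C] [FaithfulSMul R C]
    (p : Ideal R) [p.IsPrime] : Nontrivial (C →ₗ[R] R ⧸ p) := by
  have : Nontrivial (p.ResidueField ⊗[R] C) :=
    (Module.mem_support_iff_nontrivial_residueField_tensorProduct ⟨p, ‹_›⟩).mp
      (Module.mem_support_of_faithfulSMul _)
  have : Nontrivial (C →ₗ[R] p.ResidueField) :=
    (LinearMap.liftBaseChangeEquiv p.ResidueField).nontrivial_congr.mpr inferInstance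
  exact LinearMap.nontrivial_of_isFractionRing (R ⧸ p) p.ResidueField

theorem LinearMap.nontrivial_of_faithfulSMul [IsNoetherianRing R] [Module.Finite R C]
    [FaithfulSMul R C] (N : Type*) [AddCommGroup N] [Module R N] [Nontrivial N] :
    Nontrivial (C →ₗ[R] N) := by
  obtain ⟨p, hp⟩ := associatedPrimes.nonempty R N
  obtain ⟨_, ι, hι⟩ := (isAssociatedPrime_iff_exists_injective_linearMap p N).mp hp
  have := LinearMap.nontrivial_quotient_of_faithfulSMul (C := C) p
  exact Function.Injective.nontrivial (f := (ι ∘ₗ ·)) fun _ _ h => (LinearMap.cancel_left hι).mp h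

theorem TensorProduct.nontrivial_of_faithfulSMul [IsNoetherianRing R] [Module.Finite R C]
    [FaithfulSMul R C] (M : Type*) [AddCommGroup M] [Module R M] [Nontrivial M] :
    Nontrivial (C ⊗[R] M) := by
  have : Nontrivial (CharacterModule M) := CharacterModule.nontrivial_iff.mpr ‹_›
  have := LinearMap.nontrivial_of_faithfulSMul (R := R) (C := C) (CharacterModule M)
  exact CharacterModule.nontrivial_iff.mp CharacterModule.homEquiv.symm.nontrivial

end

theorem IsSemidualizing.faithfulSMul {R : Type u} [CommRing R] {C : Type u} [AddCommGroup C]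
    [Module R C] (hC : IsSemidualizing R C) : FaithfulSMul R C :=
  ⟨fun h => hC.2.1.injective (LinearMap.ext h)⟩

/-- For a semidualizing module `C` and any module `M`: `M ≠ 0` iff `Hom_R(C, M) ≠ 0`,
and `M ≠ 0` iff `C ⊗_R M ≠ 0`. -/
theorem nontrivial_hom_and_tensor_iff (R : Type u) [CommRing R] [IsNoetherianRing R]
    (C : Type u) [AddCommGroup C] [Module R C] (hC : IsSemidualizing R C)
    (M : Type u) [AddCommGroup M] [Module R M] :
    (Nontrivial M ↔ Nontrivial (C →ₗ[R] M)) ∧ (Nontrivial M ↔ Nontrivial (C ⊗[R] M)) := by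
  have := hC.1
  have := hC.faithfulSMul
  refine ⟨⟨fun _ => LinearMap.nontrivial_of_faithfulSMul M, fun _ => ?_⟩,
    ⟨fun _ => TensorProduct.nontrivial_of_faithfulSMul M, fun _ => ?_⟩⟩
  · exact (subsingleton_or_nontrivial M).resolve_left fun _ => not_nontrivial (C →ₗ[R] M) ‹_›
  · exact (subsingleton_or_nontrivial M).resolve_left fun _ => not_nontrivial (C ⊗[R] M) ‹_›
end

section
/- Let R be a commutative Noetherian ring, C a semidualizing R-module, M a C-flat R-module, and E an injective R-module. Then Hom_R(M, E) is a C-injective R-module. -/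
open CategoryTheory

universe u

open scoped TensorProduct

/-- An `R`-module is `C`-flat if it is isomorphic to `C ⊗_R F` for some flat `R`-module `F`. -/
def IsCFlat (R : Type u) [CommRing R] (C : Type u) [AddCommGroup C] [Module R C]
    (M : Type u) [AddCommGroup M] [Module R M] : Prop :=
  ∃ (F : Type u) (_ : AddCommGroup F) (_ : Module R F),
    Module.Flat R F ∧ Nonempty ((C ⊗[R] F) ≃ₗ[R] M)

/-- An `R`-module is `C`-injective if it is isomorphic to `Hom_R(C, I)` for some injective
`R`-module `I`. -/
def IsCInjective (R : Type u) [CommRing R] (C : Type u) [AddCommGroup C] [Module R C]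
    (M : Type u) [AddCommGroup M] [Module R M] : Prop :=
  ∃ (I : Type u) (_ : AddCommGroup I) (_ : Module R I),
    Module.Injective R I ∧ Nonempty ((C →ₗ[R] I) ≃ₗ[R] M)

universe v

/-- Adjunction of `⊗ F` and `Hom(F, -)`: an extension problem for `F →ₗ[R] E` along `f` is one
for `E` along `f.rTensor F`, which is still injective because `F` is flat. -/
instance Module.Injective.linearMap_of_flat (R : Type*) [CommRing R] (F E : Type v)
    [AddCommGroup F] [Module R F] [Module.Flat R F]
    [AddCommGroup E] [Module R E] [Module.Injective R E] :
    Module.Injective R (F →ₗ[R] E) where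
  out X Y _ _ _ _ f hf g := by
    obtain ⟨h, hh⟩ := Module.Injective.out (f.rTensor F)
      (Module.Flat.rTensor_preserves_injective_linearMap f hf) (TensorProduct.uncurry _ X F E g)
    refine ⟨TensorProduct.curry h, fun x => LinearMap.ext fun y => ?_⟩
    simpa using hh (x ⊗ₜ[R] y)

theorem isCInjective_hom_of_isCFlat_general (R : Type u) [CommRing R]
    (C : Type u) [AddCommGroup C] [Module R C]
    (M : Type u) [AddCommGroup M] [Module R M] (hM : IsCFlat R C M)
    (E : Type u) [AddCommGroup E] [Module R E] (hE : Module.Injective R E) :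
    IsCInjective R C (M →ₗ[R] E) := by
  obtain ⟨F, _, _, hF, ⟨e⟩⟩ := hM
  have hom_tensor_equiv : (C →ₗ[R] F →ₗ[R] E) ≃ₗ[R] (M →ₗ[R] E) :=
    (TensorProduct.lift.equiv (RingHom.id R) C F E).trans (e.arrowCongr (LinearEquiv.refl R E))
  exact ⟨F →ₗ[R] E, inferInstance, inferInstance, inferInstance, ⟨hom_tensor_equiv⟩⟩

/-- If `M` is `C`-flat and `E` is injective, then `Hom_R(M, E)` is `C`-injective. -/
theorem isCInjective_hom_of_isCFlat (R : Type u) [CommRing R] [IsNoetherianRing R]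
    (C : Type u) [AddCommGroup C] [Module R C] (hC : IsSemidualizing R C)
    (M : Type u) [AddCommGroup M] [Module R M] (hM : IsCFlat R C M)
    (E : Type u) [AddCommGroup E] [Module R E] (hE : Module.Injective R E) :
    IsCInjective R C (M →ₗ[R] E) :=
  isCInjective_hom_of_isCFlat_general R C M hM E hE
end

section
/- Let R be a commutative Noetherian ring, C a semidualizing R-module, M a C-injective R-module, and E an injective R-module. Then Hom_R(M, E) is a C-flat R-module. -/
open CategoryTheory

universe u

open scoped TensorProduct

/-! Write `M ≅ Hom(C, I)` with `I` injective. For finitely presented `C` and injective `E` the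
evaluation map `C ⊗ Hom(I, E) → Hom(Hom(C, I), E)`, `c ⊗ g ↦ (f ↦ g (f c))`, is bijective: both
sides are right exact in `C`, since `Hom(-, E)` is exact, and the map is bijective on finite free
modules, so the five lemma applies to a finite presentation of `C`. Thus
`Hom(M, E) ≅ C ⊗ Hom(I, E)`. Moreover `Hom(I, E)` is flat: for an ideal `J` (finitely presented,
`R` being Noetherian) the same isomorphism identifies `J ⊗ Hom(I, E) → R ⊗ Hom(I, E)` with the
`Hom(-, E)`-dual of the restriction `Hom(R, I) → Hom(J, I)`, which is surjective as `I` is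
injective. -/

open TensorProduct LinearMap

namespace Module.Injective

universe v

variable {R : Type*} [CommRing R] {A B C E : Type v} [AddCommGroup A] [Module R A]
  [AddCommGroup B] [Module R B] [AddCommGroup C] [Module R C] [AddCommGroup E] [Module R E]

lemma lcomp_surjective (hE : Module.Injective R E) {f : A →ₗ[R] B} (hf : Function.Injective f) :
    Function.Surjective (lcomp R E f) :=
  fun φ ↦ (hE.out f hf φ).imp fun _ hψ ↦ LinearMap.ext hψ

lemma exact_lcomp (hE : Module.Injective R E) {f : A →ₗ[R] B} {g : B →ₗ[R] C}
    (hfg : Function.Exact f g) : Function.Exact (lcomp R E g) (lcomp R E f) := by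
  intro φ
  refine ⟨fun hφ ↦ ?_, fun ⟨ψ, hψ⟩ ↦ ?_⟩
  · have hker : LinearMap.ker g ≤ LinearMap.ker φ := by
      rw [hfg.linearMap_ker_eq]
      exact LinearMap.range_le_ker_iff.mpr hφ
    obtain ⟨ψ, hψ⟩ := hE.out _ (LinearMap.ker_eq_bot.mp (Submodule.ker_liftQ_eq_bot' _ g rfl))
      ((LinearMap.ker g).liftQ φ hker)
    exact ⟨ψ, LinearMap.ext fun b ↦ hψ (Submodule.Quotient.mk b)⟩
  · rw [← hψ, lcomp_apply', lcomp_apply', LinearMap.comp_assoc, hfg.linearMap_comp_eq_zero,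
      LinearMap.comp_zero]

end Module.Injective

section HomEvaluation

variable {R : Type u} [CommRing R] {M N I E : Type u} [AddCommGroup M] [Module R M]
  [AddCommGroup N] [Module R N] [AddCommGroup I] [Module R I] [AddCommGroup E] [Module R E]

variable (R M I E) in
noncomputable def homEvaluation : M ⊗[R] (I →ₗ[R] E) →ₗ[R] ((M →ₗ[R] I) →ₗ[R] E) :=
  TensorProduct.lift ((llcomp R (M →ₗ[R] I) I E).flip ∘ₗ applyₗ)

@[simp] lemma homEvaluation_tmul (m : M) (g : I →ₗ[R] E) (f : M →ₗ[R] I) :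
    homEvaluation R M I E (m ⊗ₜ g) f = g (f m) := rfl

lemma lcomp_lcomp_comp_homEvaluation (u : M →ₗ[R] N) :
    lcomp R E (lcomp R I u) ∘ₗ homEvaluation R M I E =
      homEvaluation R N I E ∘ₗ u.rTensor (I →ₗ[R] E) := by
  ext m g f
  rfl

lemma homEvaluation_pi_bijective (ι : Type) [Fintype ι] [DecidableEq ι] :
    Function.Bijective (homEvaluation R (ι → R) I E) := by
  let e₁ : (ι → R) ⊗[R] (I →ₗ[R] E) ≃ₗ[R] (ι → I →ₗ[R] E) :=
    TensorProduct.comm R _ _ ≪≫ₗ piScalarRight R R (I →ₗ[R] E) ι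
  let e₂ : (((ι → R) →ₗ[R] I) →ₗ[R] E) ≃ₗ[R] (ι → I →ₗ[R] E) :=
    (LinearEquiv.piRing R I ι R).arrowCongr (.refl R E) ≪≫ₗ (lsum R (fun _ : ι ↦ I) R).symm
  have h : e₂.toLinearMap ∘ₗ homEvaluation R (ι → R) I E = e₁.toLinearMap := by
    ext j g i a
    by_cases hij : i = j
    · subst hij; simp [e₁, e₂]
    · simp [e₁, e₂, hij, Ne.symm hij]
  refine (e₂.bijective.of_comp_iff' _).mp ?_
  rw [← LinearEquiv.coe_coe, ← LinearMap.coe_comp, h]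
  exact e₁.bijective

theorem homEvaluation_bijective [Module.FinitePresentation R M] (hE : Module.Injective R E) :
    Function.Bijective (homEvaluation R M I E) := by
  obtain ⟨n, m, g, f, hg, hfg⟩ := Module.FinitePresentation.exists_fin' R M
  exact bijective_of_surjective_of_bijective_of_right_exact
    (f.rTensor _) (g.rTensor _) (lcomp R E (lcomp R I f)) (lcomp R E (lcomp R I g))
    (homEvaluation R _ I E) (homEvaluation R _ I E) (homEvaluation R M I E)
    (lcomp_lcomp_comp_homEvaluation f) (lcomp_lcomp_comp_homEvaluation g)
    (rTensor_exact _ hfg hg) (hE.exact_lcomp (exact_lcomp_of_exact_of_surjective I hfg hg))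
    (homEvaluation_pi_bijective _).2 (homEvaluation_pi_bijective _) (g.rTensor_surjective _ hg)
    (hE.lcomp_surjective (lcomp_injective_of_surjective g hg))

end HomEvaluation

theorem Module.Flat.linearMap_of_injective {R : Type u} [CommRing R] [IsNoetherianRing R]
    {I E : Type u} [AddCommGroup I] [Module R I] [AddCommGroup E] [Module R E]
    (hI : Module.Injective R I) (hE : Module.Injective R E) :
    Module.Flat R (I →ₗ[R] E) := by
  refine Module.Flat.iff_rTensor_injective'.mpr fun J ↦ ?_
  have := Module.finitePresentation_of_finite R J
  have h : Function.Injective (lcomp R E (lcomp R I J.subtype) ∘ₗ homEvaluation R J I E) :=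
    (lcomp_injective_of_surjective _ (hI.lcomp_surjective J.injective_subtype)).comp
      (homEvaluation_bijective hE).1
  rw [lcomp_lcomp_comp_homEvaluation, LinearMap.coe_comp] at h
  exact h.of_comp

/-- If `M` is `C`-injective and `E` is injective, then `Hom_R(M, E)` is `C`-flat. -/
theorem isCFlat_hom_of_isCInjective (R : Type u) [CommRing R] [IsNoetherianRing R]
    (C : Type u) [AddCommGroup C] [Module R C] (hC : IsSemidualizing R C)
    (M : Type u) [AddCommGroup M] [Module R M] (hM : IsCInjective R C M)
    (E : Type u) [AddCommGroup E] [Module R E] (hE : Module.Injective R E) :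
    IsCFlat R C (M →ₗ[R] E) := by
  obtain ⟨I, _, _, hI, ⟨e⟩⟩ := hM
  have := hC.1
  have := Module.finitePresentation_of_finite R C
  exact ⟨I →ₗ[R] E, _, _, .linearMap_of_injective hI hE,
    ⟨(LinearEquiv.ofBijective _ (homEvaluation_bijective hE)).trans (e.arrowCongr (.refl R E))⟩⟩
end

section
/- Let R be a commutative Noetherian ring, C a semidualizing R-module, p a prime ideal of R, and M = Hom_R(C, E(R/p)) the (C,p)-injective R-module, where E(R/p) is the injective hull of R/p. Then M ⊗_R M ≠ 0 if and only if depth_{R_p}(C_p) = 0, i.e., the maximal ideal pR_p of R_p is an associated prime of the R_p-module C_p. -/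
open CategoryTheory

universe u

open scoped TensorProduct

/-- `f : M →ₗ[R] E` exhibits `E` as an injective hull (injective envelope) of `M`:
`E` is injective, `f` is injective, and the image of `f` is an essential submodule of `E`
(every nonzero submodule of `E` meets it nontrivially). -/
def IsInjectiveHull (R : Type u) [CommRing R] {M E : Type u}
    [AddCommGroup M] [Module R M] [AddCommGroup E] [Module R E] (f : M →ₗ[R] E) : Prop :=
  Module.Injective R E ∧ Function.Injective f ∧
    ∀ N : Submodule R E, N ≠ ⊥ → N ⊓ LinearMap.range f ≠ ⊥

/-! Over a Noetherian ring, `pR_p` is associated to `C_p` iff `p` is associated to `C`.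
If so, `R/p` embeds in `C` and `f` extends to some `φ : C → E`. Evaluating at the image of `1`
maps `M = Hom(C, E)` into the submodule of `E` killed by `p`, a torsion-free
`R/p`-module, so some `R`-linear `ℓ : M → Frac(R/p)` has `ℓ φ ≠ 0`, and `ℓ ⊗ ℓ` followed by
multiplication sends `φ ⊗ φ` to `(ℓ φ)² ≠ 0`.

If `pR_p` is not associated to `C_p`, it contains a `C_p`-regular element, whose numerator
`a ∈ p` kills nothing of `C` that survives in `C_p`. As the elements outside `p` act injectively
on `E` and `E` is injective, `a` acts surjectively on `M`; as `E` is `p`-power torsion and `C` is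
finite, every element of `M` is killed by a power of `a`. Hence
`x ⊗ y = a ^ n x' ⊗ y = x' ⊗ a ^ n y = 0` in `M ⊗ M`. -/

universe v

section

variable {R : Type*} [CommRing R]

theorem TensorProduct.subsingleton_of_surjective_smul_of_pow_smul_eq_zero
    {M N : Type*} [AddCommGroup M] [Module R M] [AddCommGroup N] [Module R N] {a : R}
    (hM : Function.Surjective (a • · : M → M)) (hN : ∀ y : N, ∃ n : ℕ, a ^ n • y = 0) :
    Subsingleton (M ⊗[R] N) := by
  refine subsingleton_of_forall_eq 0 fun z => ?_
  induction z with
  | zero => rfl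
  | tmul x y =>
    obtain ⟨n, hn⟩ := hN y
    have hMn := hM.iterate n
    rw [smul_iterate] at hMn
    obtain ⟨x', rfl⟩ := hMn x
    change (a ^ n • x') ⊗ₜ y = 0
    rw [TensorProduct.smul_tmul, hn, TensorProduct.tmul_zero]
  | add z z' hz hz' => rw [hz, hz', add_zero]

theorem TensorProduct.nontrivial_of_linearMap_ne_zero {A M N : Type*} [CommRing A]
    [NoZeroDivisors A] [Algebra R A] [AddCommGroup M] [Module R M] [AddCommGroup N]
    [Module R N] {ℓ : M →ₗ[R] A} {ℓ' : N →ₗ[R] A} (hℓ : ℓ ≠ 0) (hℓ' : ℓ' ≠ 0) :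
    Nontrivial (M ⊗[R] N) := by
  obtain ⟨x, hx⟩ := DFunLike.ne_iff.mp hℓ
  obtain ⟨y, hy⟩ := DFunLike.ne_iff.mp hℓ'
  refine nontrivial_of_ne (x ⊗ₜ y) 0 fun h => mul_ne_zero hx hy ?_
  simpa using congrArg (LinearMap.mul' R A ∘ₗ TensorProduct.map ℓ ℓ') h

theorem Module.Injective.exists_comp_eq_of_ker_le {Q : Type v} {A C : Type*} [AddCommGroup Q]
    [Module R Q] [Small.{v} R] [Module.Injective R Q] [AddCommGroup A] [Module R A]
    [AddCommGroup C] [Module R C] {g : A →ₗ[R] C} {σ : A →ₗ[R] Q}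
    (h : LinearMap.ker g ≤ LinearMap.ker σ) : ∃ ψ : C →ₗ[R] Q, ψ ∘ₗ g = σ := by
  obtain ⟨ψ, hψ⟩ := Module.Injective.extension_property R Q _ C (g.ker.liftQ g le_rfl)
    (LinearMap.ker_eq_bot.mp (Submodule.ker_liftQ_eq_bot _ _ _ le_rfl)) (g.ker.liftQ σ h)
  exact ⟨ψ, by rw [← g.ker.liftQ_mkQ g le_rfl, ← LinearMap.comp_assoc, hψ, Submodule.liftQ_mkQ]⟩

theorem exists_pow_smul_linearMap_eq_zero {C E : Type*} [AddCommGroup C] [Module R C]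
    [Module.Finite R C] [AddCommGroup E] [Module R E] {a : R}
    (h : ∀ x : E, ∃ n : ℕ, a ^ n • x = 0) (φ : C →ₗ[R] E) : ∃ n : ℕ, a ^ n • φ = 0 := by
  classical
  obtain ⟨s, hs⟩ := Module.finite_def.mp ‹Module.Finite R C›
  choose ν hν using fun c => h (φ c)
  refine ⟨s.sup ν, LinearMap.ext_on hs fun c hc => ?_⟩
  rw [LinearMap.smul_apply, ← Nat.sub_add_cancel (Finset.le_sup hc), pow_add, mul_smul, hν c,
    smul_zero, LinearMap.zero_apply]

theorem exists_linearMap_fractionRing_ne_zero {D V : Type*} [CommRing D] [IsDomain D]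
    [AddCommGroup V] [Module D V] {v : V} (hv : v ∉ Submodule.torsion D V) :
    ∃ ℓ : V →ₗ[D] FractionRing D, ℓ v ≠ 0 := by
  let mk := LocalizedModule.mkLinearMap (nonZeroDivisors D) V
  have hmk : mk v ≠ 0 := fun h => hv ((IsLocalizedModule.eq_zero_iff _ mk).mp h)
  obtain ⟨g, hg⟩ := not_forall.mp
    (mt (Module.forall_dual_apply_eq_zero_iff (FractionRing D) (mk v)).mp hmk)
  exact ⟨g.restrictScalars D ∘ₗ mk, hg⟩

theorem exists_mem_maximalIdeal_isSMulRegular {N : Type*} [IsLocalRing R] [IsNoetherianRing R]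
    [AddCommGroup N] [Module R N] [Module.Finite R N]
    (h : IsLocalRing.maximalIdeal R ∉ associatedPrimes R N) :
    ∃ r ∈ IsLocalRing.maximalIdeal R, IsSMulRegular N r := by
  by_contra! h'
  have hsub : (IsLocalRing.maximalIdeal R : Set R) ⊆ ⋃ q ∈ associatedPrimes R N, (q : Set R) := by
    rw [biUnion_associatedPrimes_eq_compl_regular]
    exact h'
  obtain ⟨q, hq, hle⟩ := ((IsLocalRing.maximalIdeal R).subset_union_prime_finite
    (associatedPrimes.finite R N) (f := id) 0 0 fun _ hq _ _ => hq.isPrime).mp hsub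
  exact h (le_antisymm hle (IsLocalRing.le_maximalIdeal hq.isPrime.ne_top) ▸ hq)

theorem exists_mem_isSMulRegular_localizedModule [IsNoetherianRing R] {C : Type*}
    [AddCommGroup C] [Module R C] [Module.Finite R C] {p : Ideal R} [p.IsPrime]
    (h : IsLocalRing.maximalIdeal (Localization.AtPrime p) ∉
      associatedPrimes (Localization.AtPrime p) (LocalizedModule p.primeCompl C)) :
    ∃ a ∈ p, IsSMulRegular (LocalizedModule p.primeCompl C) a := by
  have : IsNoetherianRing (Localization.AtPrime p) :=
    IsLocalization.isNoetherianRing p.primeCompl _ ‹_›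
  have : Module.Finite (Localization.AtPrime p) (LocalizedModule p.primeCompl C) :=
    Module.Finite.of_isLocalizedModule p.primeCompl (LocalizedModule.mkLinearMap p.primeCompl C)
  obtain ⟨r, hr, hreg⟩ := exists_mem_maximalIdeal_isSMulRegular h
  obtain ⟨⟨a, s⟩, hras⟩ := IsLocalization.surj p.primeCompl r
  refine ⟨a, ?_, ?_⟩
  · rw [← IsLocalization.AtPrime.to_map_mem_maximal_iff (Localization.AtPrime p) p, ← hras]
    exact Ideal.mul_mem_right _ _ hr
  · rw [← isSMulRegular_algebraMap_iff (Localization.AtPrime p), ← hras]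
    exact hreg.mul ((IsLocalization.map_units _ s).isSMulRegular _)

theorem LocalizedModule.ker_mkLinearMap_le_ker {S : Submonoid R} {C E : Type*}
    [AddCommGroup C] [Module R C] [AddCommGroup E] [Module R E]
    (hE : ∀ s ∈ S, IsSMulRegular E s) (φ : C →ₗ[R] E) :
    LinearMap.ker (LocalizedModule.mkLinearMap S C) ≤ LinearMap.ker φ := by
  intro c hc
  obtain ⟨s, hs⟩ := (IsLocalizedModule.eq_zero_iff S _).mp hc
  exact isSMulRegular_iff_right_eq_zero_of_smul.mp (hE s s.2) _
    (by rw [← map_smul, ← Submonoid.smul_def, hs, map_zero])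

theorem LocalizedModule.ker_lsmul_le_ker_mkLinearMap {S : Submonoid R} {C : Type*}
    [AddCommGroup C] [Module R C] {a : R} (ha : IsSMulRegular (LocalizedModule S C) a) :
    LinearMap.ker (LinearMap.lsmul R C a) ≤ LinearMap.ker (LocalizedModule.mkLinearMap S C) := by
  intro c hc
  refine isSMulRegular_iff_right_eq_zero_of_smul.mp ha _ ?_
  rw [← map_smul]
  exact congrArg _ hc |>.trans (map_zero _)

end

namespace IsInjectiveHull

section

variable {R : Type u} [CommRing R] {M E : Type u} [AddCommGroup M] [Module R M]
  [AddCommGroup E] [Module R E] {f : M →ₗ[R] E}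

theorem isSMulRegular (hE : IsInjectiveHull R f) {r : R} (hr : IsSMulRegular M r) :
    IsSMulRegular E r := by
  have hdisj : LinearMap.ker (LinearMap.lsmul R E r) ⊓ LinearMap.range f = ⊥ := by
    refine (Submodule.eq_bot_iff _).mpr ?_
    rintro _ ⟨hker, z, rfl⟩
    have hz : f (r • z) = f 0 := by simpa using hker
    rw [isSMulRegular_iff_right_eq_zero_of_smul.mp hr z (hE.2.1 hz), map_zero]
  exact (isSMulRegular_iff_ker_lsmul_eq_bot E r).mpr (not_imp_not.mp (hE.2.2 _) hdisj)

theorem exists_pow_smul_eq_zero [IsNoetherianRing R] (hE : IsInjectiveHull R f) {a : R}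
    (ha : a ∈ Module.annihilator R M) (x : E) : ∃ n : ℕ, a ^ n • x = 0 := by
  let I : ℕ →o Ideal R :=
    ⟨fun n => LinearMap.ker (LinearMap.toSpanSingleton R E (a ^ n • x)), fun m n hmn r hr => by
      simp only [LinearMap.mem_ker, LinearMap.toSpanSingleton_apply] at hr ⊢
      rw [← Nat.sub_add_cancel hmn, pow_add, mul_smul, smul_comm, hr, smul_zero]⟩
  obtain ⟨n, hn⟩ := monotone_stabilizes_iff_noetherian.mpr inferInstance I
  refine ⟨n, by_contra fun hx => ?_⟩
  have hspan : R ∙ (a ^ n • x) ≠ ⊥ := by rwa [Ne, Submodule.span_singleton_eq_bot]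
  obtain ⟨w, ⟨hw, z, rfl⟩, hw0⟩ := (Submodule.ne_bot_iff _).mp (hE.2.2 _ hspan)
  obtain ⟨r, hr⟩ := Submodule.mem_span_singleton.mp hw
  -- `a` kills `f z = r • a ^ n • x`, so `r` annihilates `a ^ (n + 1) • x`, hence `a ^ n • x`
  have hrI : r ∈ I (n + 1) := by
    change r • a ^ (n + 1) • x = 0
    rw [pow_succ', mul_smul, smul_comm, hr, ← map_smul, Module.mem_annihilator.mp ha, map_zero]
  rw [← hn (n + 1) n.le_succ] at hrI
  exact hw0 (hr ▸ hrI)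

end

variable {R : Type u} [CommRing R] {p : Ideal R} [p.IsPrime] {E : Type u} [AddCommGroup E]
  [Module R E] {f : R ⧸ p →ₗ[R] E} {C : Type u} [AddCommGroup C] [Module R C]

theorem isSMulRegular_of_notMem (hE : IsInjectiveHull R f) {s : R} (hs : s ∉ p) :
    IsSMulRegular E s :=
  hE.isSMulRegular <| (isSMulRegular_quotient_iff_mem_of_smul_mem p s).mpr fun _ hx =>
    (Ideal.IsPrime.mem_or_mem ‹_› hx).resolve_left hs

theorem subsingleton_tensor_of_maximalIdeal_notMem_associatedPrimes [IsNoetherianRing R]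
    [Module.Finite R C] (hE : IsInjectiveHull R f)
    (h : IsLocalRing.maximalIdeal (Localization.AtPrime p) ∉
      associatedPrimes (Localization.AtPrime p) (LocalizedModule p.primeCompl C)) :
    Subsingleton ((C →ₗ[R] E) ⊗[R] (C →ₗ[R] E)) := by
  have := hE.1
  obtain ⟨a, hap, ha⟩ := exists_mem_isSMulRegular_localizedModule h
  have hdiv (φ : C →ₗ[R] E) : ∃ ψ : C →ₗ[R] E, a • ψ = φ := by
    obtain ⟨ψ, hψ⟩ := Module.Injective.exists_comp_eq_of_ker_le
      ((LocalizedModule.ker_lsmul_le_ker_mkLinearMap ha).trans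
        (LocalizedModule.ker_mkLinearMap_le_ker (fun _ => hE.isSMulRegular_of_notMem) φ))
    exact ⟨ψ, LinearMap.ext fun c => by simpa using LinearMap.congr_fun hψ c⟩
  have htors := hE.exists_pow_smul_eq_zero (a := a) (by rwa [Ideal.annihilator_quotient])
  exact TensorProduct.subsingleton_of_surjective_smul_of_pow_smul_eq_zero hdiv
    (exists_pow_smul_linearMap_eq_zero htors)

theorem nontrivial_tensor_of_mem_associatedPrimes [IsNoetherianRing R] (hE : IsInjectiveHull R f)
    (hp : p ∈ associatedPrimes R C) : Nontrivial ((C →ₗ[R] E) ⊗[R] (C →ₗ[R] E)) := by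
  have := hE.1
  obtain ⟨-, ι, hι⟩ := (isAssociatedPrime_iff_exists_injective_linearMap p C).mp hp
  obtain ⟨φ, hφ⟩ := Module.Injective.extension_property R E _ C ι hι f
  have hev (ψ : C →ₗ[R] E) : ψ (ι 1) ∈ Submodule.torsionBySet R E p := by
    refine (Submodule.mem_torsionBySet_iff _ _).mpr fun ⟨a, ha⟩ => ?_
    rw [← map_smul, ← map_smul, Algebra.smul_def, mul_one, Ideal.Quotient.algebraMap_eq,
      Ideal.Quotient.eq_zero_iff_mem.mpr ha, map_zero, map_zero]
  let ev : (C →ₗ[R] E) →ₗ[R] Submodule.torsionBySet R E p :=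
    (LinearMap.applyₗ (ι 1)).codRestrict _ hev
  have hφ1 : (ev φ : E) = f 1 := LinearMap.congr_fun hφ 1
  have hv : ev φ ∉ Submodule.torsion (R ⧸ p) (Submodule.torsionBySet R E p) := by
    rintro ⟨⟨d, hd⟩, hdv⟩
    obtain ⟨s, rfl⟩ := Ideal.Quotient.mk_surjective d
    have hs : s ∉ p := fun hs => nonZeroDivisors.ne_zero hd (Ideal.Quotient.eq_zero_iff_mem.mpr hs)
    have hsf : s • f 1 = 0 := by rw [← hφ1]; exact congrArg Subtype.val hdv
    exact one_ne_zero (hE.2.1 ((isSMulRegular_iff_right_eq_zero_of_smul.mp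
      (hE.isSMulRegular_of_notMem hs) _ hsf).trans (map_zero f).symm))
  obtain ⟨ℓ, hℓ⟩ := exists_linearMap_fractionRing_ne_zero hv
  have hne : ℓ.restrictScalars R ∘ₗ ev ≠ 0 := fun h => hℓ (LinearMap.congr_fun h φ)
  exact TensorProduct.nontrivial_of_linearMap_ne_zero hne hne

end IsInjectiveHull

/-- For a prime `p` and the `(C,p)`-injective module `M = Hom_R(C, E(R/p))`:
`M ⊗_R M ≠ 0` iff `depth_{R_p}(C_p) = 0`, i.e. the maximal ideal of `R_p` is an
associated prime of `C_p`. -/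
theorem nontrivial_tensor_self_iff_depth_eq_zero (R : Type u) [CommRing R] [IsNoetherianRing R]
    (C : Type u) [AddCommGroup C] [Module R C] (hC : IsSemidualizing R C)
    (p : Ideal R) [p.IsPrime]
    (E : Type u) [AddCommGroup E] [Module R E] (f : (R ⧸ p) →ₗ[R] E)
    (hE : IsInjectiveHull R f) :
    Nontrivial ((C →ₗ[R] E) ⊗[R] (C →ₗ[R] E)) ↔
      IsLocalRing.maximalIdeal (Localization.AtPrime p) ∈
        associatedPrimes (Localization.AtPrime p) (LocalizedModule p.primeCompl C) := by
  have := hC.1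
  constructor
  · intro _
    by_contra h
    exact not_subsingleton _ (hE.subsingleton_tensor_of_maximalIdeal_notMem_associatedPrimes h)
  · intro h
    have hp : p ∈ associatedPrimes R C := by
      rw [← Module.associatedPrimes.preimage_comap_associatedPrimes_eq_associatedPrimes_of_isLocalizedModule
        p.primeCompl _ (LocalizedModule.mkLinearMap p.primeCompl C)] at h
      exact Localization.AtPrime.under_maximalIdeal (I := p) ▸ h
    exact hE.nontrivial_tensor_of_mem_associatedPrimes hp
end

section
/- Let (R, m) be a complete commutative Noetherian local ring with depth(R) > 0, let C be a semidualizing R-module, and let E(R/m) be the injective hull of the residue field R/m. Then Hom_R(C, E(R/m)) ⊗_R Hom_R(C, E(R/m)) = 0, while Hom_R(C, E(R/m)) ≠ 0. -/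
open CategoryTheory

universe u

open scoped TensorProduct

/-!
Since `R ≅ Hom_R(C, C)` and `𝔪` contains a nonzerodivisor of `R`, `Hom_R(R/𝔪, C) = 0`, so `𝔪`
contains a `C`-regular element `y`. As `E` is injective, multiplication by `y ^ n` on
`Hom_R(C, E)` is surjective; as `E` is an essential extension of `R/𝔪` and `C` is finitely
generated, every element of `Hom_R(C, E)` is killed by a power of `y`. A module killed by powers
of `y` tensored with one divisible by all powers of `y` is zero. Finally `Hom_R(C, E) ≠ 0`
because the nonzero finitely generated module `C` surjects onto `R/𝔪 ⊆ E`.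
-/

open IsLocalRing Module

section

variable {R : Type u} [CommRing R]

theorem Module.isTorsion'_powers_of_essential [IsNoetherianRing R] {E : Type*} [AddCommGroup E]
    [Module R E] {N : Submodule R E} (hN : ∀ N' : Submodule R E, N' ≠ ⊥ → N' ⊓ N ≠ ⊥)
    {y : R} (hy : ∀ n ∈ N, y • n = 0) : IsTorsion' E (Submonoid.powers y) := by
  rw [Submodule.isTorsion'_powers_iff]
  intro e
  have mono : Monotone fun n : ℕ => Ideal.torsionOf R E (y ^ n • e) := by
    refine monotone_nat_of_le_succ fun n r hr => ?_
    simp only [Ideal.mem_torsionOf_iff, pow_succ', mul_smul, smul_comm r y] at hr ⊢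
    rw [hr, smul_zero]
  obtain ⟨n, hn⟩ := monotone_stabilizes_iff_noetherian.mpr inferInstance ⟨_, mono⟩
  -- a nonzero multiple `r • y ^ n • e ∈ N` is killed by `y`, so `r` kills `y ^ (n + 1) • e`,
  -- hence `y ^ n • e` by stability
  refine ⟨n, by_contra fun hne => ?_⟩
  obtain ⟨t, ht, ht0⟩ := (Submodule.ne_bot_iff _).mp
    (hN _ (mt Submodule.span_singleton_eq_bot.mp hne))
  obtain ⟨r, rfl⟩ := Submodule.mem_span_singleton.mp (Submodule.mem_inf.mp ht).1
  have hr : r ∈ Ideal.torsionOf R E (y ^ (n + 1) • e) := by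
    rw [Ideal.mem_torsionOf_iff, pow_succ', mul_smul, smul_comm, hy _ (Submodule.mem_inf.mp ht).2]
  have hstab : Ideal.torsionOf R E (y ^ n • e) = Ideal.torsionOf R E (y ^ (n + 1) • e) :=
    hn (n + 1) n.le_succ
  rw [← hstab, Ideal.mem_torsionOf_iff] at hr
  exact ht0 hr

theorem Module.IsTorsion'.linearMap {C E : Type*} [AddCommGroup C] [Module R C]
    [Module.Finite R C] [AddCommGroup E] [Module R E] {S : Submonoid R} (hE : IsTorsion' E S) :
    IsTorsion' (C →ₗ[R] E) S := by
  intro φ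
  obtain ⟨G, hG⟩ := Module.Finite.fg_top (R := R) (M := C)
  choose s hs using fun c : C => @hE (φ c)
  refine ⟨∏ c ∈ G, s c, LinearMap.ext_on hG fun c hc => ?_⟩
  classical
  rw [LinearMap.smul_apply, ← Finset.prod_erase_mul _ _ hc, mul_smul, hs, smul_zero,
    LinearMap.zero_apply]

theorem IsSMulRegular.surjective_smul_linearMap {C E : Type u} [AddCommGroup C] [Module R C]
    [AddCommGroup E] [Module R E] [Module.Injective R E] {r : R} (hr : IsSMulRegular C r) :
    Function.Surjective fun φ : C →ₗ[R] E => r • φ := by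
  intro φ
  obtain ⟨ψ, hψ⟩ := Module.Injective.extension_property R E C C (LinearMap.lsmul R C r) hr φ
  exact ⟨ψ, by rw [← hψ]; ext; simp⟩

theorem TensorProduct.subsingleton_of_isTorsion'_of_surjective_smul {M N : Type*}
    [AddCommGroup M] [Module R M] [AddCommGroup N] [Module R N] {S : Submonoid R}
    (hM : IsTorsion' M S) (hN : ∀ s ∈ S, Function.Surjective fun b : N => s • b) :
    Subsingleton (M ⊗[R] N) := by
  refine subsingleton_of_forall_eq 0 fun z => ?_
  induction z with
  | zero => rfl
  | tmul a b =>
    obtain ⟨s, hs⟩ := hM (x := a)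
    obtain ⟨b, rfl⟩ := hN s s.2 b
    rw [← TensorProduct.smul_tmul, ← Submonoid.smul_def, hs, TensorProduct.zero_tmul]
  | add u v hu hv => rw [hu, hv, add_zero]

theorem IsLocalRing.exists_surjective_quotient_maximalIdeal [IsLocalRing R] {C : Type*}
    [AddCommGroup C] [Module R C] [Module.Finite R C] [Nontrivial C] :
    ∃ π : C →ₗ[R] R ⧸ maximalIdeal R, Function.Surjective π := by
  obtain ⟨N, hN⟩ := IsCoatomic.exists_coatom (Submodule R C)
  have := isSimpleModule_iff_isCoatom.mpr hN
  obtain ⟨I, hI, ⟨e⟩⟩ := isSimpleModule_iff_quot_maximal.mp this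
  obtain rfl := eq_maximalIdeal hI
  exact ⟨e.toLinearMap ∘ₗ N.mkQ, e.surjective.comp N.mkQ_surjective⟩

theorem subsingleton_linearMap_of_surjective_of_mem_annihilator {C N : Type*} [AddCommGroup C]
    [Module R C] [AddCommGroup N] [Module R N] {π : C →ₗ[R] N} (hπ : Function.Surjective π) {x : R}
    (hx : IsSMulRegular (Module.End R C) x) (hxN : x ∈ Module.annihilator R N) :
    Subsingleton (N →ₗ[R] C) := by
  refine subsingleton_of_forall_eq 0 fun g => ?_
  have hg : x • (g ∘ₗ π) = x • 0 := by
    ext c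
    simp [← map_smul, Module.mem_annihilator.mp hxN]
  simpa using (LinearMap.cancel_right hπ).mp (hx hg)

namespace IsSemidualizing

variable {C : Type u} [AddCommGroup C] [Module R C]

theorem nontrivial [Nontrivial R] (hC : IsSemidualizing R C) : Nontrivial C := by
  by_contra h
  rw [not_nontrivial_iff_subsingleton] at h
  exact not_subsingleton R hC.2.1.1.subsingleton

theorem isSMulRegular_end (hC : IsSemidualizing R C) {x : R} (hx : x ∈ nonZeroDivisors R) :
    IsSMulRegular (Module.End R C) x :=
  ((LinearEquiv.ofBijective (LinearMap.lsmul R C) hC.2.1).isSMulRegular_congr x).mp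
    (Module.Flat.isSMulRegular_of_nonZeroDivisors hx)

theorem exists_isSMulRegular [IsNoetherianRing R] [IsLocalRing R] (hC : IsSemidualizing R C)
    (hdepth : ∃ x ∈ maximalIdeal R, x ∈ nonZeroDivisors R) :
    ∃ y ∈ maximalIdeal R, IsSMulRegular C y := by
  have := hC.1
  have := hC.nontrivial
  obtain ⟨x, hxm, hx⟩ := hdepth
  obtain ⟨π, hπ⟩ := exists_surjective_quotient_maximalIdeal (R := R) (C := C)
  have := subsingleton_linearMap_of_surjective_of_mem_annihilator hπ (hC.isSMulRegular_end hx)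
    (by rwa [Ideal.annihilator_quotient])
  simpa [Ideal.annihilator_quotient] using IsSMulRegular.subsingleton_linearMap_iff.mp this

end IsSemidualizing

end

theorem tensor_self_eq_zero_of_complete_of_depth_pos_general (R : Type u) [CommRing R]
    [IsNoetherianRing R] [IsLocalRing R]
    (hdepth : ∃ x ∈ IsLocalRing.maximalIdeal R, x ∈ nonZeroDivisors R)
    (C : Type u) [AddCommGroup C] [Module R C] (hC : IsSemidualizing R C)
    (E : Type u) [AddCommGroup E] [Module R E]
    (f : (R ⧸ IsLocalRing.maximalIdeal R) →ₗ[R] E) (hE : IsInjectiveHull R f) :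
    Subsingleton ((C →ₗ[R] E) ⊗[R] (C →ₗ[R] E)) ∧ Nontrivial (C →ₗ[R] E) := by
  obtain ⟨hEinj, hf, hess⟩ := hE
  have := hC.1
  have := hC.nontrivial
  obtain ⟨y, hym, hy⟩ := hC.exists_isSMulRegular hdepth
  constructor
  · have hyf : ∀ e ∈ LinearMap.range f, y • e = 0 := by
      rintro _ ⟨a, rfl⟩
      rw [← map_smul, Module.mem_annihilator.mp (by rwa [Ideal.annihilator_quotient]), map_zero]
    refine TensorProduct.subsingleton_of_isTorsion'_of_surjective_smul
      (isTorsion'_powers_of_essential hess hyf).linearMap ?_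
    rintro _ ⟨n, rfl⟩
    exact (hy.pow n).surjective_smul_linearMap
  · obtain ⟨π, hπ⟩ := exists_surjective_quotient_maximalIdeal (R := R) (C := C)
    obtain ⟨c, hc⟩ := hπ 1
    refine nontrivial_of_ne (f ∘ₗ π) 0 fun h => one_ne_zero (hf ?_)
    simpa [hc] using LinearMap.congr_fun h c

/-- Over a complete Noetherian local ring `(R, 𝔪)` of positive depth (i.e. `𝔪` contains a
nonzerodivisor), for `E = E(R/𝔪)` the injective hull of the residue field we have
`Hom_R(C, E) ⊗_R Hom_R(C, E) = 0`, while `Hom_R(C, E) ≠ 0`. -/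
theorem tensor_self_eq_zero_of_complete_of_depth_pos (R : Type u) [CommRing R]
    [IsNoetherianRing R] [IsLocalRing R] [IsAdicComplete (IsLocalRing.maximalIdeal R) R]
    (hdepth : ∃ x ∈ IsLocalRing.maximalIdeal R, x ∈ nonZeroDivisors R)
    (C : Type u) [AddCommGroup C] [Module R C] (hC : IsSemidualizing R C)
    (E : Type u) [AddCommGroup E] [Module R E]
    (f : (R ⧸ IsLocalRing.maximalIdeal R) →ₗ[R] E) (hE : IsInjectiveHull R f) :
    Subsingleton ((C →ₗ[R] E) ⊗[R] (C →ₗ[R] E)) ∧ Nontrivial (C →ₗ[R] E) :=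
  tensor_self_eq_zero_of_complete_of_depth_pos_general R hdepth C hC E f hE
end

section
/- Let R be a commutative Noetherian ring, C a semidualizing R-module, and E(C) the injective hull of C. Then E(C) is a C-flat R-module if and only if for every C-flat R-module M, the injective hull E(M) is a C-flat R-module. -/
open CategoryTheory

universe u

open scoped TensorProduct

/-!
Write `E(C) ≅ C ⊗ F₀` and `M ≅ C ⊗ F` with `F₀`, `F` flat. Over a Noetherian ring `E(C) ⊗ F` is
injective: ideals are finitely presented, so `Hom(a, -)` commutes with `- ⊗ F` and Baer's criterion
applies. The embedding `M ↪ E(C) ⊗ F` extends to `E(M)`, injectively since `M` is essential in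
`E(M)`, so `E(M)` is a direct summand of `E(C) ⊗ F ≅ C ⊗ (F₀ ⊗ F)`.

`C`-flat modules are closed under direct summands: since `R ≅ Hom(C, C)` and `C` is finitely
presented, `G ≅ Hom(C, C ⊗ G)` for flat `G`. Hence for a summand `X` of `C ⊗ G`, `Hom(C, X)` is a
summand of `G`, so flat, and the evaluation `C ⊗ Hom(C, X) → X` is a summand of an isomorphism.
The converse is the case `M = C`.
-/

open TensorProduct LinearMap

section HomTensor

variable {R C N F : Type u} [CommRing R] [AddCommGroup C] [Module R C]
  [AddCommGroup N] [Module R N] [AddCommGroup F] [Module R F]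

lemma lcomp_comp_rTensorHomToHomRTensor {A : Type u} [AddCommGroup A] [Module R A]
    (p : A →ₗ[R] C) :
    lcomp R (N ⊗[R] F) p ∘ₗ rTensorHomToHomRTensor (.id R) C N F =
      rTensorHomToHomRTensor (.id R) A N F ∘ₗ (lcomp R N p).rTensor F := by
  ext g x a
  simp [rTensorHomToHomRTensor_apply]

lemma rTensorHomToHomRTensor_bijective_of_free (P : Type u) [AddCommGroup P] [Module R P]
    [Module.Free R P] [Module.Finite R P] :
    Function.Bijective (rTensorHomToHomRTensor (.id R) P N F) := by
  rw [← rTensorHomEquivHomRTensor_toLinearMap]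
  exact LinearEquiv.bijective _

-- Five lemma applied to `Hom(-, N) ⊗ F → Hom(-, N ⊗ F)` on a finite presentation of `C`.
lemma rTensorHomToHomRTensor_bijective [Module.FinitePresentation R C] [Module.Flat R F] :
    Function.Bijective (rTensorHomToHomRTensor (.id R) C N F) := by
  obtain ⟨n, m, p, g, hp, hgp⟩ := Module.FinitePresentation.exists_fin' R C
  exact bijective_of_bijective_of_injective_of_left_exact _ _ _ _ _ _ _
    (lcomp_comp_rTensorHomToHomRTensor p) (lcomp_comp_rTensorHomToHomRTensor g)
    (Module.Flat.rTensor_exact F (exact_lcomp_of_exact_of_surjective N hgp hp))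
    (exact_lcomp_of_exact_of_surjective _ hgp hp)
    (rTensorHomToHomRTensor_bijective_of_free _)
    (rTensorHomToHomRTensor_bijective_of_free _).1
    (Module.Flat.rTensor_preserves_injective_linearMap _ (lcomp_injective_of_surjective p hp))
    (lcomp_injective_of_surjective p hp)

instance Module.Injective.tensorProduct_of_flat [IsNoetherianRing R] [Module.Injective R N]
    [Module.Flat R F] : Module.Injective R (N ⊗[R] F) := by
  refine Module.Baer.injective (Module.Baer.iff_surjective.mpr fun a => ?_)
  have hrestrict :=
    Module.Baer.iff_surjective.mp (Module.Baer.of_injective (Q := N) inferInstance) a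
  have : Module.FinitePresentation R a := Module.finitePresentation_of_finite R a
  refine Function.Surjective.of_comp (g := rTensorHomToHomRTensor (.id R) R N F) ?_
  rw [← coe_comp, lcomp_comp_rTensorHomToHomRTensor]
  exact rTensorHomToHomRTensor_bijective.2.comp (rTensor_surjective F hrestrict)

end HomTensor

lemma Function.Bijective.of_retract {α β γ δ : Type*} {f : α → β} {g : γ → δ}
    {a : α → γ} {b : γ → α} {i : β → δ} {r : δ → β} (hba : Function.LeftInverse b a)
    (hri : Function.LeftInverse r i) (hga : g ∘ a = i ∘ f) (hfb : f ∘ b = r ∘ g)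
    (hg : Function.Bijective g) : Function.Bijective f := by
  refine ⟨fun x y hxy => hba.injective (hg.1 ?_), fun y => ?_⟩
  · have hx := congrFun hga x
    have hy := congrFun hga y
    simp only [Function.comp_apply] at hx hy
    rw [hx, hy, hxy]
  · obtain ⟨z, hz⟩ := hg.2 (i y)
    exact ⟨b z, by rw [← Function.comp_apply (f := f), hfb, Function.comp_apply, hz, hri]⟩

section TensorHomEval

variable (R C : Type u) [CommRing R] [AddCommGroup C] [Module R C]

def tensorHomEval (X : Type*) [AddCommGroup X] [Module R X] : C ⊗[R] (C →ₗ[R] X) →ₗ[R] X :=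
  lift (applyₗ (R := R))

variable {R C}

@[simp]
lemma tensorHomEval_tmul {X : Type*} [AddCommGroup X] [Module R X] (c : C) (φ : C →ₗ[R] X) :
    tensorHomEval R C X (c ⊗ₜ φ) = φ c :=
  rfl

lemma tensorHomEval_comp_lTensor {X Y : Type*} [AddCommGroup X] [Module R X] [AddCommGroup Y]
    [Module R Y] (u : X →ₗ[R] Y) :
    tensorHomEval R C Y ∘ₗ (compRight R u).lTensor C = u ∘ₗ tensorHomEval R C X := by
  ext c φ
  simp

lemma tensorHomEval_bijective_of_retract {X Y : Type*} [AddCommGroup X] [Module R X]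
    [AddCommGroup Y] [Module R Y] (i : X →ₗ[R] Y) (r : Y →ₗ[R] X) (hri : r ∘ₗ i = LinearMap.id)
    (hY : Function.Bijective (tensorHomEval R C Y)) :
    Function.Bijective (tensorHomEval R C X) := by
  have hcomp : compRight (M := C) R r ∘ₗ compRight R i = LinearMap.id := by
    ext φ c
    exact LinearMap.congr_fun hri (φ c)
  refine Function.Bijective.of_retract (f := tensorHomEval R C X) (g := tensorHomEval R C Y)
    (i := i) (r := r) (a := (compRight R i).lTensor C)
    (b := (compRight R r).lTensor C) (fun z => ?_) (fun x => ?_)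
    (congrArg DFunLike.coe (tensorHomEval_comp_lTensor i))
    (congrArg DFunLike.coe (tensorHomEval_comp_lTensor r)) hY
  · rw [← LinearMap.comp_apply, ← lTensor_comp, hcomp, lTensor_id, LinearMap.id_apply]
  · exact LinearMap.congr_fun hri x

variable [Module.FinitePresentation R C] {G : Type u} [AddCommGroup G] [Module R G]
  [Module.Flat R G]

lemma mk_flip_bijective (hC : Function.Bijective (lsmul R C)) :
    Function.Bijective (mk R C G).flip := by
  let e := LinearEquiv.ofBijective _ hC
  have hmk : (mk R C G).flip = rTensorHomToHomRTensor (.id R) C C G ∘ₗ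
      (e.rTensor G).toLinearMap ∘ₗ (TensorProduct.lid R G).symm.toLinearMap := by
    ext g c
    simp [e]
  rw [hmk, coe_comp, coe_comp, LinearEquiv.coe_coe, LinearEquiv.coe_coe]
  exact rTensorHomToHomRTensor_bijective.comp ((e.rTensor G).bijective.comp
    (TensorProduct.lid R G).symm.bijective)

lemma tensorHomEval_tensor_bijective (hC : Function.Bijective (lsmul R C)) :
    Function.Bijective (tensorHomEval R C (C ⊗[R] G)) := by
  let L := (LinearEquiv.ofBijective _ (mk_flip_bijective (G := G) hC)).lTensor C
  have hL : tensorHomEval R C (C ⊗[R] G) ∘ₗ L.toLinearMap = LinearMap.id := by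
    ext c g
    simp [L]
  refine (Function.Bijective.of_comp_iff _ L.bijective).mp ?_
  rw [← LinearEquiv.coe_coe, ← coe_comp, hL]
  exact Function.bijective_id

end TensorHomEval

section CFlat

variable {R C : Type u} [CommRing R] [AddCommGroup C] [Module R C]

lemma IsCFlat.self : IsCFlat R C C :=
  ⟨R, inferInstance, inferInstance, inferInstance, ⟨TensorProduct.rid R C⟩⟩

lemma IsCFlat.rTensor {X : Type u} [AddCommGroup X] [Module R X] (hX : IsCFlat R C X)
    (F : Type u) [AddCommGroup F] [Module R F] [Module.Flat R F] : IsCFlat R C (X ⊗[R] F) := by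
  obtain ⟨F₀, _, _, _, ⟨e⟩⟩ := hX
  exact ⟨F₀ ⊗[R] F, inferInstance, inferInstance, inferInstance,
    ⟨(TensorProduct.assoc R C F₀ F).symm ≪≫ₗ e.rTensor F⟩⟩

lemma IsCFlat.of_retract [Module.FinitePresentation R C] (hC : Function.Bijective (lsmul R C))
    {X Y : Type u} [AddCommGroup X] [Module R X] [AddCommGroup Y] [Module R Y]
    (hY : IsCFlat R C Y) (i : X →ₗ[R] Y) (r : Y →ₗ[R] X) (hri : r ∘ₗ i = LinearMap.id) :
    IsCFlat R C X := by
  obtain ⟨G, _, _, _, ⟨e⟩⟩ := hY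
  let i' := e.symm.toLinearMap ∘ₗ i
  let r' := r ∘ₗ e.toLinearMap
  have hri' : r' ∘ₗ i' = LinearMap.id := by
    ext x
    simpa [r', i'] using LinearMap.congr_fun hri x
  have : Module.Flat R (C →ₗ[R] C ⊗[R] G) :=
    Module.Flat.of_linearEquiv (LinearEquiv.ofBijective _ (mk_flip_bijective hC)).symm
  have hHom : Module.Flat R (C →ₗ[R] X) :=
    Module.Flat.of_retract (compRight R i') (compRight R r') (by
      ext φ c
      exact LinearMap.congr_fun hri' (φ c))
  exact ⟨C →ₗ[R] X, inferInstance, inferInstance, hHom, ⟨LinearEquiv.ofBijective _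
    (tensorHomEval_bijective_of_retract i' r' hri' (tensorHomEval_tensor_bijective hC))⟩⟩

end CFlat

section InjectiveHull

variable {R M E : Type u} [CommRing R] [AddCommGroup M] [Module R M] [AddCommGroup E] [Module R E]
  {f : M →ₗ[R] E}

lemma IsInjectiveHull.injective_of_injective_comp (hf : IsInjectiveHull R f)
    {N : Type u} [AddCommGroup N] [Module R N] (h : E →ₗ[R] N)
    (hhf : Function.Injective (h ∘ₗ f)) :
    Function.Injective h := by
  rw [← ker_eq_bot]
  by_contra hker
  refine hf.2.2 _ hker (eq_bot_iff.mpr ?_)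
  rintro _ ⟨hx, m, rfl⟩
  have : m = 0 := hhf (by simpa using hx)
  simp [this]

lemma IsInjectiveHull.exists_retract_of_injective (hf : IsInjectiveHull R f)
    {I : Type u} [AddCommGroup I] [Module R I] [Module.Injective R I] (g : M →ₗ[R] I)
    (hg : Function.Injective g) : ∃ (i : E →ₗ[R] I) (r : I →ₗ[R] E), r ∘ₗ i = LinearMap.id := by
  obtain ⟨i, hi⟩ := Module.Injective.out f hf.2.1 g
  have hi_inj : Function.Injective i :=
    hf.injective_of_injective_comp i (by rwa [show i ∘ₗ f = g from LinearMap.ext hi])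
  have := hf.1
  obtain ⟨r, hr⟩ := Module.Injective.out i hi_inj LinearMap.id
  exact ⟨i, r, LinearMap.ext hr⟩

end InjectiveHull

/-- `E(C)` is `C`-flat iff the injective hull of every `C`-flat module is `C`-flat. -/
theorem injectiveHull_isCFlat_iff_injectiveHull_of_isCFlat (R : Type u) [CommRing R]
    [IsNoetherianRing R]
    (C : Type u) [AddCommGroup C] [Module R C] (hC : IsSemidualizing R C)
    (E : Type u) [AddCommGroup E] [Module R E] (f : C →ₗ[R] E) (hE : IsInjectiveHull R f) :
    IsCFlat R C E ↔
      ∀ (M : Type u) [AddCommGroup M] [Module R M], IsCFlat R C M →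
        ∀ (E' : Type u) [AddCommGroup E'] [Module R E'] (f' : M →ₗ[R] E'),
          IsInjectiveHull R f' → IsCFlat R C E' := by
  refine ⟨fun hEC M _ _ hM E' _ _ f' hf' => ?_, fun h => h C IsCFlat.self E f hE⟩
  obtain ⟨F, _, _, _, ⟨eM⟩⟩ := hM
  have : Module.Finite R C := hC.1
  have : Module.FinitePresentation R C := Module.finitePresentation_of_finite R C
  have : Module.Injective R E := hE.1
  have hM_emb : Function.Injective (f.rTensor F ∘ₗ eM.symm.toLinearMap) :=
    (Module.Flat.rTensor_preserves_injective_linearMap f hE.2.1).comp eM.symm.injective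
  obtain ⟨i, r, hri⟩ := hf'.exists_retract_of_injective _ hM_emb
  exact (hEC.rTensor F).of_retract hC.2.1 i r hri
end
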